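/- The function R_DPC(t) = g(2) − g((1−t)²/(1+t²)) − log₂(1+t²), with g as above, attains its maximum on [0,1] at an interior point: there exists t* ∈ (0,1) with R_DPC(t*) > R_DPC(1) and R_DPC(t*) > R_DPC(0). -/

import Mathlib

/-- `g(N) = (N+1)log₂(N+1) − N log₂ N` for `N > 0`, and `g(0) = 0`. -/
noncomputable def g (N : ℝ) : ℝ :=
  if N = 0 then 0 else (N + 1) * Real.logb 2 (N + 1) - N * Real.logb 2 N

/-- The dirty-paper coding rate for the pure-loss bosonic channel with
`N_A = N_S = 2`, `η = 1/2`, `N_E = 0`. -/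
noncomputable def RDPC (t : ℝ) : ℝ :=
  g 2 - g ((1 - t) ^ 2 / (1 + t ^ 2)) - Real.logb 2 (1 + t ^ 2)

/-!
Take `t = 4/5`: the argument of `g` becomes `1/41` and `1 + t² = 82/50`, and since
`g (1/n) = g n / n` one gets `RDPC (4/5) = g 2 - 1 + log₂ 50 - (42/41) log₂ 42`. As
`RDPC 1 = g 2 - 1` and `RDPC 0 = g 2 - 2`, beating both endpoints amounts to the integer
inequality `42⁴² < 50⁴¹`.
-/

open Real

lemma g_one : g 1 = 2 := by
  norm_num [g, logb_self_eq_one]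

lemma g_one_div {n : ℝ} (hn : 0 < n) : g (1 / n) = g n / n := by
  have hn' : n ≠ 0 := hn.ne'
  have hsum : 1 / n + 1 = (n + 1) / n := by rw [div_add_one hn', add_comm]
  rw [g, g, if_neg (one_div_ne_zero hn'), if_neg hn', hsum, logb_div (by linarith) hn', one_div,
    logb_inv]
  ring

lemma RDPC_zero : RDPC 0 = g 2 - 2 := by
  norm_num [RDPC, g_one]

lemma RDPC_one : RDPC 1 = g 2 - 1 := by
  norm_num [RDPC, g, logb_self_eq_one]

lemma RDPC_four_fifths : RDPC (4 / 5) = g 2 - 1 + logb 2 50 - 42 / 41 * logb 2 42 := by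
  have hx : (1 - 4 / 5 : ℝ) ^ 2 / (1 + (4 / 5) ^ 2) = 1 / 41 := by norm_num
  have hy : (1 + (4 / 5) ^ 2 : ℝ) = 41 * 2 / 50 := by norm_num
  have hg : g 41 = 42 * logb 2 42 - 41 * logb 2 41 := by norm_num [g]
  rw [RDPC, hx, g_one_div (by norm_num), hg, hy, logb_div (by norm_num) (by norm_num),
    logb_mul (by norm_num) (by norm_num), logb_self_eq_one one_lt_two]
  ring

lemma mul_logb_lt_mul_logb_of_pow_lt_pow {b x y : ℝ} {m n : ℕ} (hb : 1 < b) (hx : 0 < x)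
    (h : x ^ m < y ^ n) : m * logb b x < n * logb b y := by
  simpa only [logb_pow] using logb_lt_logb hb (pow_pos hx m) h

lemma RDPC_one_lt_RDPC_four_fifths : RDPC 1 < RDPC (4 / 5) := by
  have hpow : (42 : ℕ) * logb 2 (42 : ℝ) < (41 : ℕ) * logb 2 (50 : ℝ) :=
    mul_logb_lt_mul_logb_of_pow_lt_pow one_lt_two (by norm_num) (by norm_num)
  push_cast at hpow
  rw [RDPC_one, RDPC_four_fifths]
  linarith

/-- The maximum of the dirty-paper coding rate on `[0,1]` is attained at an
interior point; in particular the MMSE coefficient `t = 1` is not optimal. -/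
theorem RDPC_interior_max :
    ∃ t : ℝ, t ∈ Set.Ioo (0 : ℝ) 1 ∧ RDPC 1 < RDPC t ∧ RDPC 0 < RDPC t := by
  have hzero_lt_one : RDPC 0 < RDPC 1 := by
    rw [RDPC_zero, RDPC_one]
    linarith
  exact ⟨4 / 5, by norm_num, RDPC_one_lt_RDPC_four_fifths,
    hzero_lt_one.trans RDPC_one_lt_RDPC_four_fifths⟩
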